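/- Let (fₙ) be a sequence of strictly convex coercive functions fₙ : ℝ → ℝ converging pointwise to f∞(a) = D₁ a + (D₂/2) a², with D₂ > 0. Then the sequence of minimizers argmin fₙ converges to -D₁/D₂, and min fₙ converges to -D₁²/(2D₂). -/
import Mathlib


open Filter

/-- strictly convex coercive functions converging pointwise to the quadratic
`a ↦ D₁a + (D₂/2)a²` have minimizers converging to `-D₁/D₂` and minima converging to
`-D₁²/(2D₂)`. -/
theorem stmt_4
    (f : ℕ → ℝ → ℝ) (D1 D2 : ℝ) (hD2 : 0 < D2)
    (hconv : ∀ n, StrictConvexOn ℝ Set.univ (f n))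
    (hcoer : ∀ n, Tendsto (f n) (cocompact ℝ) atTop)
    (hpt : ∀ a : ℝ, Tendsto (fun n => f n a) atTop (nhds (D1 * a + D2 / 2 * a ^ 2)))
    (x : ℕ → ℝ) (hmin : ∀ n, ∀ a : ℝ, f n (x n) ≤ f n a) :
    Tendsto x atTop (nhds (-D1 / D2)) ∧
    Tendsto (fun n => f n (x n)) atTop (nhds (-(D1 ^ 2) / (2 * D2))) := by
  set A : ℝ := -D1 / D2 with hA
  have hg : ∀ a : ℝ, D1 * a + D2 / 2 * a ^ 2
      = D2 / 2 * (a - A) ^ 2 + (-(D1 ^ 2) / (2 * D2)) := by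
    intro a
    rw [hA]
    field_simp
    ring
  have hptA := hpt A
  -- Step 1: eventually |x n - A| ≤ ε
  have key : ∀ ε > (0:ℝ), ∀ᶠ n in atTop, |x n - A| ≤ ε := by
    intro ε hε
    have h1 : D1 * A + D2 / 2 * A ^ 2 < D1 * (A + ε) + D2 / 2 * (A + ε) ^ 2 := by
      rw [hg, hg]; nlinarith [mul_pos hD2 (mul_pos hε hε)]
    have h2 : D1 * A + D2 / 2 * A ^ 2 < D1 * (A - ε) + D2 / 2 * (A - ε) ^ 2 := by
      rw [hg, hg]; nlinarith [mul_pos hD2 (mul_pos hε hε)]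
    have e1 := hptA.eventually_lt (hpt (A + ε)) h1
    have e2 := hptA.eventually_lt (hpt (A - ε)) h2
    filter_upwards [e1, e2] with n h1' h2'
    by_contra hcon
    push_neg at hcon
    rcases lt_abs.1 hcon with h | h
    · -- x n > A + ε
      have hseg : A + ε ∈ segment ℝ A (x n) := by
        rw [segment_eq_Icc (by linarith : A ≤ x n)]
        constructor <;> [linarith; linarith]
      have := (hconv n).convexOn.le_on_segment (Set.mem_univ A) (Set.mem_univ (x n)) hseg
      have hmx : max (f n A) (f n (x n)) = f n A :=
        max_eq_left (hmin n A)
      rw [hmx] at this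
      exact absurd this (not_le.2 h1')
    · -- x n < A - ε
      have h' : x n < A - ε := by linarith
      have hseg : A - ε ∈ segment ℝ (x n) A := by
        rw [segment_eq_Icc (by linarith : x n ≤ A)]
        constructor <;> [linarith; linarith]
      have := (hconv n).convexOn.le_on_segment (Set.mem_univ (x n)) (Set.mem_univ A) hseg
      have hmx : max (f n (x n)) (f n A) = f n A :=
        max_eq_right (hmin n A)
      rw [hmx] at this
      exact absurd this (not_le.2 h2')
  have hx : Tendsto x atTop (nhds A) := by
    rw [Metric.tendsto_nhds]
    intro ε hε
    filter_upwards [key (ε / 2) (by linarith)] with n hn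
    rw [Real.dist_eq]
    linarith
  refine ⟨hx, ?_⟩
  -- Step 2: values converge
  have hδ : Tendsto (fun n => |x n - A|) atTop (nhds 0) := by
    have h0 : Tendsto (fun n => x n - A) atTop (nhds (A - A)) :=
      hx.sub tendsto_const_nhds
    have := h0.abs
    simpa using this
  set M : ℕ → ℝ := fun n => max (f n (A - 1)) (f n (A + 1)) with hM
  have hMt : Tendsto M atTop (nhds (max (D1 * (A - 1) + D2 / 2 * (A - 1) ^ 2)
      (D1 * (A + 1) + D2 / 2 * (A + 1) ^ 2))) :=
    (hpt (A - 1)).max (hpt (A + 1))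
  have hAval : D1 * A + D2 / 2 * A ^ 2 = -(D1 ^ 2) / (2 * D2) := by
    rw [hg]; simp
  have hlo : Tendsto (fun n => (1 + |x n - A|) * f n A - |x n - A| * M n) atTop
      (nhds (-(D1 ^ 2) / (2 * D2))) := by
    have hone : Tendsto (fun _ : ℕ => (1:ℝ)) atTop (nhds 1) := tendsto_const_nhds
    have := (((hone.add hδ).mul hptA).sub (hδ.mul hMt))
    simpa [hAval] using this
  have hup : Tendsto (fun n => f n A) atTop (nhds (-(D1 ^ 2) / (2 * D2))) := by
    rw [← hAval]; exact hptA
  refine tendsto_of_tendsto_of_tendsto_of_le_of_le' hlo hup ?_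
    (Filter.Eventually.of_forall fun n => hmin n A)
  filter_upwards [key 1 one_pos] with n hn
  rcases le_or_gt A (x n) with hc | hc
  · -- x n ≥ A, use c = A - 1
    set δ : ℝ := x n - A with hδdef
    have habs : |x n - A| = δ := abs_of_nonneg (by linarith)
    have hδ0 : 0 ≤ δ := by linarith
    have hδ1 : δ ≤ 1 := by rw [← habs]; exact hn
    have hconvx := (hconv n).convexOn.2 (Set.mem_univ (A - 1)) (Set.mem_univ (x n))
      (show (0:ℝ) ≤ δ / (1 + δ) by positivity)
      (show (0:ℝ) ≤ 1 / (1 + δ) by positivity)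
      (by field_simp; try ring)
    have hpteq : (δ / (1 + δ)) • (A - 1) + (1 / (1 + δ)) • x n = A := by
      simp only [smul_eq_mul]
      field_simp
      ring
    rw [hpteq] at hconvx
    simp only [smul_eq_mul] at hconvx
    have hcM : f n (A - 1) ≤ M n := le_max_left _ _
    rw [habs]
    have h1δ : (0:ℝ) < 1 + δ := by linarith
    have : (1 + δ) * f n A ≤ δ * f n (A - 1) + f n (x n) := by
      have := mul_le_mul_of_nonneg_left hconvx (le_of_lt h1δ)
      calc (1 + δ) * f n A ≤ (1 + δ) * (δ / (1 + δ) * f n (A - 1) + 1 / (1 + δ) * f n (x n)) := this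
        _ = δ * f n (A - 1) + f n (x n) := by field_simp; try ring
    nlinarith
  · -- x n < A, use c = A + 1
    set δ : ℝ := A - x n with hδdef
    have habs : |x n - A| = δ := by rw [abs_of_nonpos (by linarith)]; ring
    have hδ0 : 0 ≤ δ := by linarith
    have hδ1 : δ ≤ 1 := by rw [← habs]; exact hn
    have hconvx := (hconv n).convexOn.2 (Set.mem_univ (A + 1)) (Set.mem_univ (x n))
      (show (0:ℝ) ≤ δ / (1 + δ) by positivity)
      (show (0:ℝ) ≤ 1 / (1 + δ) by positivity)
      (by field_simp; try ring)
    have hpteq : (δ / (1 + δ)) • (A + 1) + (1 / (1 + δ)) • x n = A := by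
      simp only [smul_eq_mul]
      field_simp
      ring
    rw [hpteq] at hconvx
    simp only [smul_eq_mul] at hconvx
    have hcM : f n (A + 1) ≤ M n := le_max_right _ _
    rw [habs]
    have h1δ : (0:ℝ) < 1 + δ := by linarith
    have : (1 + δ) * f n A ≤ δ * f n (A + 1) + f n (x n) := by
      have := mul_le_mul_of_nonneg_left hconvx (le_of_lt h1δ)
      calc (1 + δ) * f n A ≤ (1 + δ) * (δ / (1 + δ) * f n (A + 1) + 1 / (1 + δ) * f n (x n)) := this
        _ = δ * f n (A + 1) + f n (x n) := by field_simp; try ring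
    nlinarith
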